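/- arXiv:hep-th/9406129 — 4 statements merged into one kernel-verified Lean document; each statement's English description precedes it below -/
import Mathlib

section
/- Let P be an algebra over a field k, A a Hopf algebra, and Δ_R : P → P ⊗ A an algebra homomorphism making P a right A-comodule algebra. Define T_R : P ⊗ P → P ⊗ A by T_R(p ⊗ q) = p·q₍₀₎ ⊗ q₍₁₎, and define T_U : Ker(m_P) → P ⊗ Ker(ε) as the restriction of T_R (where m_P is the multiplication map and ε the counit). Then T_R is surjective if and only if T_U is surjective. -/
open TensorProduct

/-- The canonical map `T_R : P ⊗ P → P ⊗ A`, `p ⊗ q ↦ p·q₍₀₎ ⊗ q₍₁₎`,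
built from the coaction `ρ : P → P ⊗ A`. -/
noncomputable def TRmap (k : Type*) [Field k] {A P : Type*} [Ring A] [HopfAlgebra k A]
    [Ring P] [Algebra k P] (ρ : P →ₐ[k] P ⊗[k] A) :
    P ⊗[k] P →ₗ[k] P ⊗[k] A :=
  (LinearMap.rTensor A (LinearMap.mul' k P)) ∘ₗ
    (TensorProduct.assoc k P P A).symm.toLinearMap ∘ₗ
      (LinearMap.lTensor P ρ.toLinearMap)

/-- `T_R` is surjective iff its restriction `T_U` to `Ker m_P`,
viewed as a map onto `P ⊗ Ker ε`, is surjective (i.e. the image of `Ker m_P`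
under `T_R` is exactly the submodule `P ⊗ Ker ε` of `P ⊗ A`). -/
theorem stmt0 (k : Type*) [Field k] {A P : Type*} [Ring A] [HopfAlgebra k A]
    [Ring P] [Algebra k P] (ρ : P →ₐ[k] P ⊗[k] A)
    (hcoassoc : (LinearMap.rTensor A ρ.toLinearMap) ∘ₗ ρ.toLinearMap =
      (TensorProduct.assoc k P A A).symm.toLinearMap ∘ₗ
        (LinearMap.lTensor P (Coalgebra.comul (R := k) (A := A))) ∘ₗ ρ.toLinearMap)
    (hcounit : (TensorProduct.rid k P).toLinearMap ∘ₗ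
      (LinearMap.lTensor P (Coalgebra.counit (R := k) (A := A))) ∘ₗ ρ.toLinearMap =
        LinearMap.id) :
    Function.Surjective (TRmap k ρ) ↔
      Submodule.map (TRmap k ρ) (LinearMap.ker (LinearMap.mul' k P)) =
        LinearMap.range (LinearMap.lTensor P
          (LinearMap.ker (Coalgebra.counit (R := k) (A := A))).subtype) := by
  classical
  set εA : A →ₗ[k] k := Coalgebra.counit (R := k) (A := A) with hεA
  set E : P ⊗[k] A →ₗ[k] P :=
    (TensorProduct.rid k P).toLinearMap ∘ₗ LinearMap.lTensor P εA with hEdef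
  -- key identity: E ∘ T_R = mul'
  have h1 : E ∘ₗ (LinearMap.rTensor A (LinearMap.mul' k P)) ∘ₗ
      (TensorProduct.assoc k P P A).symm.toLinearMap
      = (LinearMap.mul' k P) ∘ₗ LinearMap.lTensor P E := by
    ext p q a
    simp [hEdef, mul_smul_comm]
  have hE : E ∘ₗ TRmap k ρ = LinearMap.mul' k P := by
    have : E ∘ₗ TRmap k ρ =
        (E ∘ₗ (LinearMap.rTensor A (LinearMap.mul' k P)) ∘ₗ
          (TensorProduct.assoc k P P A).symm.toLinearMap) ∘ₗ
            LinearMap.lTensor P ρ.toLinearMap := by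
      simp only [TRmap, LinearMap.comp_assoc]
    rw [this, h1, LinearMap.comp_assoc, ← LinearMap.lTensor_comp]
    have hEρ : E ∘ₗ ρ.toLinearMap = LinearMap.id := by
      rw [hEdef, LinearMap.comp_assoc]; exact hcounit
    rw [hEρ, LinearMap.lTensor_id, LinearMap.comp_id]
  have hEpt : ∀ x : P ⊗[k] P, E (TRmap k ρ x) = LinearMap.mul' k P x :=
    fun x ↦ LinearMap.congr_fun hE x
  -- exactness: ker (lTensor εA) = range (lTensor subtype)
  have hex : Function.Exact ((LinearMap.ker εA).subtype) εA :=
    LinearMap.exact_subtype_ker_map εA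
  have hex2 := Module.Flat.lTensor_exact P hex
  have hker : LinearMap.ker (LinearMap.lTensor P εA) =
      LinearMap.range (LinearMap.lTensor P (LinearMap.ker εA).subtype) :=
    hex2.linearMap_ker_eq
  -- elements of range (lTensor subtype) are killed by lTensor εA, hence by E
  have hrangeE : ∀ y ∈ LinearMap.range (LinearMap.lTensor P (LinearMap.ker εA).subtype),
      E y = 0 := by
    intro y hy
    rw [← hker] at hy
    simp [hEdef, LinearMap.mem_ker.mp hy]
  -- T_R (p ⊗ 1) = p ⊗ 1
  have hT1 : ∀ p : P, TRmap k ρ (p ⊗ₜ[k] (1 : P)) = p ⊗ₜ[k] (1 : A) := by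
    intro p
    simp [TRmap, Algebra.TensorProduct.one_def, LinearMap.mul'_apply]
  constructor
  · intro hsurj
    apply le_antisymm
    · rintro y ⟨x, hx, rfl⟩
      rw [← hker]
      have hEx : E (TRmap k ρ x) = 0 := by
        rw [hEpt]; exact LinearMap.mem_ker.mp hx
      rw [LinearMap.mem_ker]
      have : ((TensorProduct.rid k P).toLinearMap)
          ((LinearMap.lTensor P εA) (TRmap k ρ x)) = 0 := hEx
      exact (TensorProduct.rid k P).map_eq_zero_iff.mp this
    · rintro y hy
      obtain ⟨x, rfl⟩ := hsurj y
      refine ⟨x, ?_, rfl⟩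
      show x ∈ LinearMap.ker (LinearMap.mul' k P)
      rw [LinearMap.mem_ker, ← hEpt]
      exact hrangeE _ hy
  · intro h
    rw [← LinearMap.range_eq_top, eq_top_iff]
    rintro z -
    induction z using TensorProduct.induction_on with
    | zero => exact Submodule.zero_mem _
    | add a b ha hb => exact Submodule.add_mem _ ha hb
    | tmul p a =>
      have hmem : a - εA a • 1 ∈ LinearMap.ker εA := by
        simp [hεA, smul_eq_mul]
      have hsplit : p ⊗ₜ[k] a =
          (LinearMap.lTensor P (LinearMap.ker εA).subtype)
            (p ⊗ₜ[k] (⟨a - εA a • 1, hmem⟩ : LinearMap.ker εA))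
          + εA a • (p ⊗ₜ[k] (1 : A)) := by
        simp [TensorProduct.tmul_sub, TensorProduct.tmul_smul, sub_add_cancel]
      rw [hsplit]
      refine Submodule.add_mem _ ?_ ?_
      · have hm : (LinearMap.lTensor P (LinearMap.ker εA).subtype)
            (p ⊗ₜ[k] (⟨a - εA a • 1, hmem⟩ : LinearMap.ker εA)) ∈
            LinearMap.range (LinearMap.lTensor P (LinearMap.ker εA).subtype) :=
          ⟨_, rfl⟩
        rw [← h] at hm
        obtain ⟨w, -, hw⟩ := hm
        exact ⟨w, hw⟩
      · exact Submodule.smul_mem _ _ ⟨p ⊗ₜ[k] 1, hT1 p⟩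
end

section
/- With T_R and T_U as above, the kernels coincide: Ker(T_U) = Ker(T_R); more precisely the inclusion Ker(m_P) ⊆ P ⊗ P restricts to an isomorphism Ker(T_U) ≅ Ker(T_R). -/
open TensorProduct

lemma aux_mul (k : Type*) [Field k] {A P : Type*} [Ring A] [HopfAlgebra k A]
    [Ring P] [Algebra k P] (p : P) (z : P ⊗[k] A) :
    (TensorProduct.rid k P) (LinearMap.lTensor P (Coalgebra.counit (R := k) (A := A))
      (LinearMap.rTensor A (LinearMap.mul' k P)
        ((TensorProduct.assoc k P P A).symm (p ⊗ₜ z)))) =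
      p * (TensorProduct.rid k P) (LinearMap.lTensor P (Coalgebra.counit (R := k) (A := A)) z) := by
  induction z using TensorProduct.induction_on with
  | zero => rw [tmul_zero, LinearEquiv.map_zero]; simp only [map_zero, mul_zero]
  | tmul q a => simp [mul_smul_comm, mul_assoc]
  | add x y hx hy =>
      simp only [tmul_add, map_add, hx, hy, mul_add]

/-- `Ker T_U = Ker T_R`: the kernel of `T_R` is contained
in `Ker m_P`, so the kernel of the restriction `T_U` of `T_R` to `Ker m_P`
coincides (under the inclusion `Ker m_P ⊆ P ⊗ P`) with the kernel of `T_R`. -/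
theorem stmt1 (k : Type*) [Field k] {A P : Type*} [Ring A] [HopfAlgebra k A]
    [Ring P] [Algebra k P] (ρ : P →ₐ[k] P ⊗[k] A)
    (hcoassoc : (LinearMap.rTensor A ρ.toLinearMap) ∘ₗ ρ.toLinearMap =
      (TensorProduct.assoc k P A A).symm.toLinearMap ∘ₗ
        (LinearMap.lTensor P (Coalgebra.comul (R := k) (A := A))) ∘ₗ ρ.toLinearMap)
    (hcounit : (TensorProduct.rid k P).toLinearMap ∘ₗ
      (LinearMap.lTensor P (Coalgebra.counit (R := k) (A := A))) ∘ₗ ρ.toLinearMap =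
        LinearMap.id) :
    LinearMap.ker (TRmap k ρ) ⊓ LinearMap.ker (LinearMap.mul' k P) =
      LinearMap.ker (TRmap k ρ) := by
  have key : (TensorProduct.rid k P).toLinearMap ∘ₗ
      (LinearMap.lTensor P (Coalgebra.counit (R := k) (A := A))) ∘ₗ TRmap k ρ =
      LinearMap.mul' k P := by
    apply TensorProduct.ext'
    intro p q
    have hq := congrArg (· q) (congrArg DFunLike.coe hcounit)
    simp only [LinearMap.coe_comp, Function.comp_apply, LinearEquiv.coe_coe,
      LinearMap.id_coe, id_eq] at hq ⊢
    rw [TRmap]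
    simp only [LinearMap.coe_comp, Function.comp_apply, LinearEquiv.coe_coe,
      LinearMap.lTensor_tmul]
    rw [aux_mul, hq, LinearMap.mul'_apply]
  apply le_antisymm inf_le_left
  refine le_inf le_rfl ?_
  intro x hx
  have : LinearMap.mul' k P x = 0 := by
    rw [← key]
    simp only [LinearMap.coe_comp, Function.comp_apply]
    rw [LinearMap.mem_ker] at hx
    rw [hx]
    simp
  exact this
end

section
/- Let P be a right A-comodule algebra, B = P^{co A} the subalgebra of coinvariants. Let T_B : P ⊗_B P → P ⊗ A be induced by p ⊗_B q ↦ p q₍₀₎ ⊗ q₍₁₎. Then T_B is bijective (P is an A-Galois extension) if and only if: (i) T_R : P ⊗ P → P ⊗ A, p ⊗ q ↦ p q₍₀₎ ⊗ q₍₁₎, is surjective, and (ii) Ker(T_R) = P·Ω¹B·P, where Ω¹B = Ker(m_B) viewed inside P ⊗ P and P·Ω¹B·P denotes the P-sub-bimodule of P ⊗ P it generates. -/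
open TensorProduct

/-- The coinvariants `B = P^{co A}` of the coaction. -/
def coinv (k : Type*) [Field k] {A P : Type*} [Ring A] [HopfAlgebra k A]
    [Ring P] [Algebra k P] (ρ : P →ₐ[k] P ⊗[k] A) : Set P :=
  {p : P | ρ p = p ⊗ₜ[k] (1 : A)}

/-- The submodule `K ⊆ P ⊗ P` of `B`-balancing relations, so that
`P ⊗_B P = (P ⊗ P)/K`. -/
def balK (k : Type*) [Field k] {A P : Type*} [Ring A] [HopfAlgebra k A]
    [Ring P] [Algebra k P] (ρ : P →ₐ[k] P ⊗[k] A) : Submodule k (P ⊗[k] P) :=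
  Submodule.span k {x : P ⊗[k] P | ∃ (p q b : P), b ∈ coinv k ρ ∧
    x = (p * b) ⊗ₜ[k] q - p ⊗ₜ[k] (b * q)}

/-- The sub-bimodule `P·Ω¹B·P ⊆ P ⊗ P`, spanned by the elements
`p(b ⊗ b' − 1 ⊗ bb')q` with `b, b' ∈ B`. -/
def POBP (k : Type*) [Field k] {A P : Type*} [Ring A] [HopfAlgebra k A]
    [Ring P] [Algebra k P] (ρ : P →ₐ[k] P ⊗[k] A) : Submodule k (P ⊗[k] P) :=
  Submodule.span k {x : P ⊗[k] P | ∃ (p q b b' : P), b ∈ coinv k ρ ∧ b' ∈ coinv k ρ ∧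
    x = (p * b) ⊗ₜ[k] (b' * q) - p ⊗ₜ[k] (b * b' * q)}

lemma TR_tmul (k : Type*) [Field k] {A P : Type*} [Ring A] [HopfAlgebra k A]
    [Ring P] [Algebra k P] (ρ : P →ₐ[k] P ⊗[k] A) (p q : P) :
    TRmap k ρ (p ⊗ₜ[k] q) = LinearMap.rTensor A (LinearMap.mulLeft k p) (ρ q) := by
  simp only [TRmap, LinearMap.comp_apply, LinearEquiv.coe_coe, LinearMap.lTensor_tmul,
    AlgHom.toLinearMap_apply]
  induction ρ q using TensorProduct.induction_on with
  | zero => rw [tmul_zero, LinearEquiv.map_zero, LinearMap.map_zero, LinearMap.map_zero]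
  | tmul a b => simp [TensorProduct.assoc_symm_tmul, LinearMap.mul'_apply]
  | add x y hx hy => rw [tmul_add, map_add, map_add, map_add, hx, hy]

lemma tmul_one_mul (k : Type*) [Field k] {A P : Type*} [Ring A] [HopfAlgebra k A]
    [Ring P] [Algebra k P] (b : P) (x : P ⊗[k] A) :
    (b ⊗ₜ[k] (1 : A)) * x = LinearMap.rTensor A (LinearMap.mulLeft k b) x := by
  induction x using TensorProduct.induction_on with
  | zero => simp
  | tmul a c => simp [Algebra.TensorProduct.tmul_mul_tmul]
  | add x y hx hy => simp [mul_add, hx, hy]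

lemma balK_le_ker (k : Type*) [Field k] {A P : Type*} [Ring A] [HopfAlgebra k A]
    [Ring P] [Algebra k P] (ρ : P →ₐ[k] P ⊗[k] A) :
    balK k ρ ≤ LinearMap.ker (TRmap k ρ) := by
  rw [balK, Submodule.span_le]
  rintro x ⟨p, q, b, hb, rfl⟩
  rw [SetLike.mem_coe, LinearMap.mem_ker, map_sub, TR_tmul, TR_tmul, map_mul,
    hb, tmul_one_mul, ← LinearMap.comp_apply, ← LinearMap.rTensor_comp,
    ← LinearMap.mulLeft_mul, sub_self]

lemma one_mem_coinv (k : Type*) [Field k] {A P : Type*} [Ring A] [HopfAlgebra k A]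
    [Ring P] [Algebra k P] (ρ : P →ₐ[k] P ⊗[k] A) : (1 : P) ∈ coinv k ρ := by
  simp [coinv, map_one, Algebra.TensorProduct.one_def]

lemma balK_eq_POBP (k : Type*) [Field k] {A P : Type*} [Ring A] [HopfAlgebra k A]
    [Ring P] [Algebra k P] (ρ : P →ₐ[k] P ⊗[k] A) : balK k ρ = POBP k ρ := by
  apply le_antisymm
  · rw [balK, Submodule.span_le]
    rintro x ⟨p, q, b, hb, rfl⟩
    apply Submodule.subset_span
    exact ⟨p, q, b, 1, hb, one_mem_coinv k ρ, by rw [one_mul, mul_one]⟩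
  · rw [POBP, Submodule.span_le]
    rintro x ⟨p, q, b, b', hb, hb', rfl⟩
    apply Submodule.subset_span
    exact ⟨p, b' * q, b, hb, by rw [mul_assoc]⟩

/-- `P` is an `A`-Galois extension (the canonical map
`T_B : P ⊗_B P → P ⊗ A` is bijective) iff `T_R` is surjective and
`Ker T_R = P·Ω¹B·P`. Here `P ⊗_B P` is realized as the quotient of `P ⊗ P`
by the balancing relations `K`, and `T_B` is the induced map. -/
theorem stmt2 (k : Type*) [Field k] {A P : Type*} [Ring A] [HopfAlgebra k A]
    [Ring P] [Algebra k P] (ρ : P →ₐ[k] P ⊗[k] A)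
    (hcoassoc : (LinearMap.rTensor A ρ.toLinearMap) ∘ₗ ρ.toLinearMap =
      (TensorProduct.assoc k P A A).symm.toLinearMap ∘ₗ
        (LinearMap.lTensor P (Coalgebra.comul (R := k) (A := A))) ∘ₗ ρ.toLinearMap)
    (hcounit : (TensorProduct.rid k P).toLinearMap ∘ₗ
      (LinearMap.lTensor P (Coalgebra.counit (R := k) (A := A))) ∘ₗ ρ.toLinearMap =
        LinearMap.id)
    (TB : ((P ⊗[k] P) ⧸ (balK k ρ)) →ₗ[k] P ⊗[k] A)
    (hTB : ∀ y : P ⊗[k] P, TB ((balK k ρ).mkQ y) = TRmap k ρ y) :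
    Function.Bijective TB ↔
      (Function.Surjective (TRmap k ρ) ∧ LinearMap.ker (TRmap k ρ) = POBP k ρ) := by
  have hmkQ : Function.Surjective (balK k ρ).mkQ := Submodule.mkQ_surjective _
  rw [← balK_eq_POBP k ρ]
  constructor
  · rintro ⟨hinj, hsurj⟩
    constructor
    · intro z
      obtain ⟨x, hx⟩ := hsurj z
      obtain ⟨y, rfl⟩ := hmkQ x
      exact ⟨y, by rw [← hTB y, hx]⟩
    · apply le_antisymm
      · intro y hy
        rw [LinearMap.mem_ker] at hy
        have : TB ((balK k ρ).mkQ y) = TB 0 := by rw [hTB y, hy, map_zero]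
        have := hinj this
        rwa [Submodule.mkQ_apply, Submodule.Quotient.mk_eq_zero] at this
      · exact balK_le_ker k ρ
  · rintro ⟨hsurj, hker⟩
    constructor
    · intro x₁ x₂ hx
      obtain ⟨y₁, rfl⟩ := hmkQ x₁
      obtain ⟨y₂, rfl⟩ := hmkQ x₂
      rw [← sub_eq_zero, ← map_sub, Submodule.mkQ_apply, Submodule.Quotient.mk_eq_zero,
        ← hker, LinearMap.mem_ker, map_sub, ← hTB, ← hTB, hx, sub_self]
    · intro z
      obtain ⟨y, hy⟩ := hsurj z
      exact ⟨(balK k ρ).mkQ y, by rw [hTB, hy]⟩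
end

section
/- Let M be a smooth n-dimensional manifold and P(M, GL(n,ℝ)) a smooth principal GL(n,ℝ)-bundle with projection π : P → M. Then P is isomorphic (as a principal bundle over M) to the frame bundle FM if and only if there exists a smooth ℝⁿ-valued 1-form θ on P such that θ is id-equivariant (R_g* θ = g⁻¹ ∘ θ for all g ∈ GL(n,ℝ)) and Ker θ_p = Ker (π_*)_p at every point p ∈ P. -/
open scoped Manifold


noncomputable section

attribute [local instance] Matrix.linftyOpNormedAddCommGroup Matrix.linftyOpNormedRing
  Matrix.linftyOpNormedAlgebra

/-- The general linear group `GL(n, ℝ)` as the units of the matrix algebra,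
with its canonical Lie group structure. -/
abbrev GLn (n : ℕ) : Type := (Matrix (Fin n) (Fin n) ℝ)ˣ

instance matrixSelfChartedSpace (n : ℕ) : @ChartedSpace (Matrix (Fin n) (Fin n) ℝ)
    (@UniformSpace.toTopologicalSpace _ (@PseudoMetricSpace.toUniformSpace _
      (@SeminormedAddCommGroup.toPseudoMetricSpace _ (@NormedAddCommGroup.toSeminormedAddCommGroup _
        Matrix.linftyOpNormedAddCommGroup)))) (Matrix (Fin n) (Fin n) ℝ) _ :=
  chartedSpaceSelf _

instance matrixProdSelfChartedSpace (n : ℕ) : @ChartedSpace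
    (Matrix (Fin n) (Fin n) ℝ × Matrix (Fin n) (Fin n) ℝ)
    (@UniformSpace.toTopologicalSpace _ (@PseudoMetricSpace.toUniformSpace _
      (@SeminormedAddCommGroup.toPseudoMetricSpace _ (@NormedAddCommGroup.toSeminormedAddCommGroup _
        (@Prod.normedAddCommGroup _ _ Matrix.linftyOpNormedAddCommGroup
          Matrix.linftyOpNormedAddCommGroup)))))
    (Matrix (Fin n) (Fin n) ℝ × Matrix (Fin n) (Fin n) ℝ) _ :=
  chartedSpaceSelf _

instance GLn.instChartedSpace (n : ℕ) : @ChartedSpace (Matrix (Fin n) (Fin n) ℝ)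
    (@UniformSpace.toTopologicalSpace _ (@PseudoMetricSpace.toUniformSpace _
      (@SeminormedAddCommGroup.toPseudoMetricSpace _ (@NormedAddCommGroup.toSeminormedAddCommGroup _
        Matrix.linftyOpNormedAddCommGroup)))) (GLn n) _ :=
  Units.instChartedSpace

/-- The model space for `GL(n, ℝ)`. -/
abbrev glModel (n : ℕ) := 𝓘(ℝ, Matrix (Fin n) (Fin n) ℝ)

/-- The frame bundle of an `n`-manifold `M`: its points are the pairs of a point
`x ∈ M` and a linear frame `ℝⁿ ≃ T_x M`. -/
abbrev FrameBundle (n : ℕ) (M : Type*) [TopologicalSpace M]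
    [ChartedSpace (EuclideanSpace ℝ (Fin n)) M] : Type _ :=
  Σ x : M, (Fin n → ℝ) ≃ₗ[ℝ] TangentSpace (𝓡 n) x

namespace Stmt17Aux

open Bundle Filter Function Topology

/-- identity linear equiv between `EuclideanSpace ℝ (Fin n)` and `Fin n → ℝ`. -/
abbrev eqE (n : ℕ) : EuclideanSpace ℝ (Fin n) ≃L[ℝ] (Fin n → ℝ) :=
  (WithLp.linearEquiv 2 ℝ (Fin n → ℝ)).toContinuousLinearEquiv

lemma mulVec_toMatrix' {n : ℕ} (f : (Fin n → ℝ) →ₗ[ℝ] (Fin n → ℝ)) (v : Fin n → ℝ) :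
    (LinearMap.toMatrix' f).mulVec v = f v := by
  rw [← Matrix.toLin'_apply, Matrix.toLin'_toMatrix']

lemma isUnit_toMatrix' {n : ℕ} (e : (Fin n → ℝ) ≃ₗ[ℝ] (Fin n → ℝ)) :
    IsUnit (LinearMap.toMatrix' e.toLinearMap) := by
  refine ⟨⟨LinearMap.toMatrix' e.toLinearMap, LinearMap.toMatrix' e.symm.toLinearMap, ?_, ?_⟩,
    rfl⟩
  · rw [← LinearMap.toMatrix'_comp, show e.toLinearMap ∘ₗ e.symm.toLinearMap = LinearMap.id from
      LinearMap.ext fun x => e.apply_symm_apply x]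
    exact LinearMap.toMatrix'_id
  · rw [← LinearMap.toMatrix'_comp, show e.symm.toLinearMap ∘ₗ e.toLinearMap = LinearMap.id from
      LinearMap.ext fun x => e.symm_apply_apply x]
    exact LinearMap.toMatrix'_id

section Manifolds

variable {EN HN : Type*} [NormedAddCommGroup EN] [NormedSpace ℝ EN] [TopologicalSpace HN]
  (IN : ModelWithCorners ℝ EN HN) {N : Type*} [TopologicalSpace N] [ChartedSpace HN N]
  [IsManifold IN (⊤ : ℕ∞) N]

/-- constant-coordinate local section of the tangent bundle, smooth at the center point. -/
lemma sectionV_contMDiffAt (q0 : N) (c : EN) :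
    ContMDiffAt IN (IN.prod 𝓘(ℝ, EN)) (⊤ : ℕ∞)
      (fun q => Bundle.TotalSpace.mk' EN q
        ((trivializationAt EN (TangentSpace IN) q0).symm q c)) q0 := by
  rw [Bundle.contMDiffAt_section]
  have h1 : ∀ᶠ q in nhds q0, ((trivializationAt EN (TangentSpace IN) q0)
      (Bundle.TotalSpace.mk' EN q ((trivializationAt EN (TangentSpace IN) q0).symm q c))).2
      = c := by
    filter_upwards [(trivializationAt EN (TangentSpace IN) q0).open_baseSet.mem_nhds
      (FiberBundle.mem_baseSet_trivializationAt EN (TangentSpace IN) q0)] with q hq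
    exact congrArg Prod.snd ((trivializationAt EN (TangentSpace IN) q0).apply_mk_symm hq c)
  exact contMDiffAt_const.congr_of_eventuallyEq h1

/-- assembling a smooth matrix-valued map from smooth entries. -/
lemma matrix_contMDiffAt {n : ℕ} {f : N → Matrix (Fin n) (Fin n) ℝ} {q0 : N}
    (h : ∀ i j, ContMDiffAt IN 𝓘(ℝ) (⊤ : ℕ∞) (fun q => f q i j) q0) :
    ContMDiffAt IN 𝓘(ℝ, Matrix (Fin n) (Fin n) ℝ) (⊤ : ℕ∞) f q0 := by
  let ψ : (Fin n → Fin n → ℝ) ≃ₗ[ℝ] Matrix (Fin n) (Fin n) ℝ :=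
    { Matrix.of with map_add' := fun _ _ => rfl, map_smul' := fun _ _ => rfl }
  have hψ : ContMDiff 𝓘(ℝ, Fin n → Fin n → ℝ) 𝓘(ℝ, Matrix (Fin n) (Fin n) ℝ) (⊤ : ℕ∞)
      (ψ.toContinuousLinearEquiv : (Fin n → Fin n → ℝ) → Matrix (Fin n) (Fin n) ℝ) :=
    contMDiff_iff_contDiff.mpr (ψ.toContinuousLinearEquiv : (Fin n → Fin n → ℝ) →L[ℝ]
      Matrix (Fin n) (Fin n) ℝ).contDiff
  have hg : ContMDiffAt IN 𝓘(ℝ, Fin n → Fin n → ℝ) (⊤ : ℕ∞) (fun q i j => f q i j) q0 :=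
    contMDiffAt_pi_space.mpr fun i => contMDiffAt_pi_space.mpr fun j => h i j
  exact ((hψ _).comp q0 hg).congr_of_eventuallyEq (Filter.Eventually.of_forall fun q => rfl)

/-- smooth product of smooth matrix-valued maps. -/
lemma matrix_mul_contMDiffAt {n : ℕ} {f g : N → Matrix (Fin n) (Fin n) ℝ} {q0 : N}
    (hf : ContMDiffAt IN 𝓘(ℝ, Matrix (Fin n) (Fin n) ℝ) (⊤ : ℕ∞) f q0)
    (hg : ContMDiffAt IN 𝓘(ℝ, Matrix (Fin n) (Fin n) ℝ) (⊤ : ℕ∞) g q0) :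
    ContMDiffAt IN 𝓘(ℝ, Matrix (Fin n) (Fin n) ℝ) (⊤ : ℕ∞) (fun q => f q * g q) q0 := by
  have hmul : ContMDiff 𝓘(ℝ, Matrix (Fin n) (Fin n) ℝ × Matrix (Fin n) (Fin n) ℝ)
      𝓘(ℝ, Matrix (Fin n) (Fin n) ℝ) (⊤ : ℕ∞)
      (fun p : Matrix (Fin n) (Fin n) ℝ × Matrix (Fin n) (Fin n) ℝ => p.1 * p.2) :=
    contMDiff_iff_contDiff.mpr contDiff_mul
  exact (hmul _).comp q0 (hf.prodMk_space hg)

/-- smooth `Ring.inverse` of a smooth matrix-valued map which is a unit at the point. -/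
lemma matrix_inv_contMDiffAt {n : ℕ} {f : N → Matrix (Fin n) (Fin n) ℝ} {q0 : N}
    (hf : ContMDiffAt IN 𝓘(ℝ, Matrix (Fin n) (Fin n) ℝ) (⊤ : ℕ∞) f q0) (hu : IsUnit (f q0)) :
    ContMDiffAt IN 𝓘(ℝ, Matrix (Fin n) (Fin n) ℝ) (⊤ : ℕ∞) (fun q => Ring.inverse (f q)) q0 := by
  have hinv : ContMDiffAt 𝓘(ℝ, Matrix (Fin n) (Fin n) ℝ) 𝓘(ℝ, Matrix (Fin n) (Fin n) ℝ) (⊤ : ℕ∞)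
      Ring.inverse (f q0) := by
    refine contMDiffAt_iff_contDiffAt.mpr ?_
    simpa [hu.unit_spec] using contDiffAt_ringInverse ℝ hu.unit
  exact hinv.comp q0 hf

/-- a map into the units of a complete normed algebra is smooth at a point as soon as its
composition with the embedding into the algebra is. -/
lemma units_contMDiffAt {R : Type*} [NormedRing R] [CompleteSpace R] [NormedAlgebra ℝ R]
    {f : N → Rˣ} {q0 : N}
    (hf : ContMDiffAt IN 𝓘(ℝ, R) (⊤ : ℕ∞) (fun q => (f q : R)) q0) :
    ContMDiffAt IN 𝓘(ℝ, R) (⊤ : ℕ∞) f q0 := by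
  haveI : Nonempty Rˣ := ⟨1⟩
  have h1 := contMDiffOn_isOpenEmbedding_symm (I := 𝓘(ℝ, R)) (n := (⊤ : ℕ∞)) (Units.isOpenEmbedding_val : IsOpenEmbedding (Units.val : Rˣ → R))
  have h2 : ContMDiffAt IN 𝓘(ℝ, R) (⊤ : ℕ∞)
      (((IsOpenEmbedding.toOpenPartialHomeomorph Units.val Units.isOpenEmbedding_val).symm) ∘
        (fun q => (f q : R))) q0 :=
    ContMDiffAt.comp q0 (h1.contMDiffAt
      (Units.isOpenEmbedding_val.isOpen_range.mem_nhds (Set.mem_range_self (f q0)))) hf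
  refine h2.congr_of_eventuallyEq (Eventually.of_forall fun q => ?_)
  exact (Units.isOpenEmbedding_val.toOpenPartialHomeomorph_left_inv (x := f q)).symm

end Manifolds


section Core

variable {EN HN : Type*} [NormedAddCommGroup EN] [NormedSpace ℝ EN] [TopologicalSpace HN]
  (IN : ModelWithCorners ℝ EN HN) {N : Type*} [TopologicalSpace N] [ChartedSpace HN N]
  [IsManifold IN (⊤ : ℕ∞) N]
  {n : ℕ} {M : Type*} [TopologicalSpace M]
  [ChartedSpace (EuclideanSpace ℝ (Fin n)) M] [IsManifold (𝓡 n) (⊤ : ℕ∞) M]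

/-- The core construction: a smooth matrix-valued local expression of a family of frames `φ`
compatible with a smooth solder-type form `θ`. -/
lemma core (pr : N → M) (hpr : ContMDiff IN (𝓡 n) (⊤ : ℕ∞) pr)
    (θ : (q : N) → (TangentSpace IN q →ₗ[ℝ] (Fin n → ℝ)))
    (φ : (q : N) → (TangentSpace (𝓡 n) (pr q) ≃ₗ[ℝ] (Fin n → ℝ)))
    (hφθ : ∀ (q : N) (X : TangentSpace IN q), φ q (mfderiv IN (𝓡 n) pr q X) = θ q X)
    (q₀ : N)
    (hθsm : ∀ W : TangentSpace IN q₀, ContMDiffAt IN.tangent 𝓘(ℝ, Fin n → ℝ) (⊤ : ℕ∞)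
      (fun X : TangentBundle IN N => θ X.proj X.snd) (Bundle.TotalSpace.mk' EN q₀ W))
    (τ : M → N) (hτ : ContMDiffAt (𝓡 n) IN (⊤ : ℕ∞) τ (pr q₀)) (hτq : τ (pr q₀) = q₀)
    (hsect : ∀ᶠ y in nhds (pr q₀), pr (τ y) = y) :
    ∃ KK : N → Matrix (Fin n) (Fin n) ℝ,
      ContMDiffAt IN 𝓘(ℝ, Matrix (Fin n) (Fin n) ℝ) (⊤ : ℕ∞) KK q₀ ∧
      (∀ᶠ q in nhds q₀, IsUnit (KK q)) ∧
      (∀ᶠ q in nhds q₀, ∀ v : Fin n → ℝ, (KK q).mulVec v =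
        φ q ((trivializationAt (EuclideanSpace ℝ (Fin n)) (TangentSpace (𝓡 n)) (pr q₀)).symm
          (pr q) (WithLp.toLp 2 v))) := by
  classical
  have hq0base : q₀ ∈ (trivializationAt EN (TangentSpace IN) q₀).baseSet :=
    FiberBundle.mem_baseSet_trivializationAt EN (TangentSpace IN) q₀
  have hx0base : pr q₀ ∈
      (trivializationAt (EuclideanSpace ℝ (Fin n)) (TangentSpace (𝓡 n)) (pr q₀)).baseSet :=
    FiberBundle.mem_baseSet_trivializationAt _ _ _
  let δ : Fin n → (Fin n → ℝ) := fun j => Pi.single j 1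
  let vj : Fin n → TangentSpace (𝓡 n) (pr q₀) := fun j =>
    (trivializationAt (EuclideanSpace ℝ (Fin n)) (TangentSpace (𝓡 n)) (pr q₀)).symm (pr q₀) (WithLp.toLp 2 (δ j))
  let Wj : Fin n → TangentSpace IN q₀ := fun j => mfderiv (𝓡 n) IN τ (pr q₀) (vj j)
  have hτd : MDifferentiableAt (𝓡 n) IN τ (pr q₀) := hτ.mdifferentiableAt (by simp)
  have hprd : ∀ q, MDifferentiableAt IN (𝓡 n) pr q := fun q => (hpr q).mdifferentiableAt (by simp)
  have hchain : mfderiv (𝓡 n) (𝓡 n) (pr ∘ τ) (pr q₀)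
      = (mfderiv IN (𝓡 n) pr (τ (pr q₀))).comp (mfderiv (𝓡 n) IN τ (pr q₀)) :=
    mfderiv_comp (pr q₀) (hprd _) hτd
  have hid : mfderiv (𝓡 n) (𝓡 n) (pr ∘ τ) (pr q₀)
      = ContinuousLinearMap.id ℝ (TangentSpace (𝓡 n) (pr q₀)) := by
    have h1 : (pr ∘ τ) =ᶠ[nhds (pr q₀)] id := hsect.mono fun y hy => hy
    rw [h1.mfderiv_eq, mfderiv_id]
  have hcompid : (mfderiv IN (𝓡 n) pr (τ (pr q₀))).comp (mfderiv (𝓡 n) IN τ (pr q₀))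
      = ContinuousLinearMap.id ℝ (TangentSpace (𝓡 n) (pr q₀)) := hchain.symm.trans hid
  have hpt : mfderiv IN (𝓡 n) pr (τ (pr q₀)) = mfderiv IN (𝓡 n) pr q₀ := by rw [hτq]
  have hWj : ∀ j, mfderiv IN (𝓡 n) pr q₀ (Wj j) = vj j := by
    intro j
    have h2 := DFunLike.congr_fun hcompid (vj j)
    rw [hpt] at h2
    exact h2
  let cc : Fin n → EN := fun j => ((trivializationAt EN (TangentSpace IN) q₀) ⟨q₀, Wj j⟩).2
  let V : Fin n → N → TangentBundle IN N := fun j q =>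
    Bundle.TotalSpace.mk' EN q ((trivializationAt EN (TangentSpace IN) q₀).symm q (cc j))
  have hVsm : ∀ j, ContMDiffAt IN (IN.prod 𝓘(ℝ, EN)) (⊤ : ℕ∞) (V j) q₀ := fun j =>
    sectionV_contMDiffAt IN q₀ (cc j)
  have hVq0 : ∀ j, (trivializationAt EN (TangentSpace IN) q₀).symm q₀ (cc j) = Wj j := fun j =>
    (trivializationAt EN (TangentSpace IN) q₀).symm_apply_apply_mk hq0base (Wj j)
  -- the matrix `A` of `θ`-readings of the sections
  let A : N → Matrix (Fin n) (Fin n) ℝ := fun q => Matrix.of fun i j =>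
    θ q ((trivializationAt EN (TangentSpace IN) q₀).symm q (cc j)) i
  have hAsm : ContMDiffAt IN 𝓘(ℝ, Matrix (Fin n) (Fin n) ℝ) (⊤ : ℕ∞) A q₀ := by
    apply matrix_contMDiffAt
    intro i j
    have h1 : ContMDiffAt IN 𝓘(ℝ, Fin n → ℝ) (⊤ : ℕ∞)
        (fun q => θ q ((trivializationAt EN (TangentSpace IN) q₀).symm q (cc j))) q₀ :=
      ContMDiffAt.comp q₀
        (hθsm ((trivializationAt EN (TangentSpace IN) q₀).symm q₀ (cc j))) (hVsm j)
    exact contMDiffAt_pi_space.mp h1 i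
  -- the matrix `B` of coordinate readings of the projected sections
  let F : Fin n → N → TangentBundle (𝓡 n) M := fun j q => tangentMap IN (𝓡 n) pr (V j q)
  let B : N → Matrix (Fin n) (Fin n) ℝ := fun q => Matrix.of fun i j =>
    ((trivializationAt (EuclideanSpace ℝ (Fin n)) (TangentSpace (𝓡 n)) (pr q₀)) (F j q)).2 i
  have hFsm : ∀ j, ContMDiffAt IN ((𝓡 n).prod 𝓘(ℝ, EuclideanSpace ℝ (Fin n))) (⊤ : ℕ∞) (F j) q₀ :=
    fun j => ((hpr.contMDiff_tangentMap (by simp)) _).comp q₀ (hVsm j)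
  have hBsm : ContMDiffAt IN 𝓘(ℝ, Matrix (Fin n) (Fin n) ℝ) (⊤ : ℕ∞) B q₀ := by
    apply matrix_contMDiffAt
    intro i j
    have h2 := (Bundle.contMDiffAt_totalSpace.mp (hFsm j)).2
    have h3 : ContMDiffAt IN 𝓘(ℝ, EuclideanSpace ℝ (Fin n)) (⊤ : ℕ∞) (fun q =>
        ((trivializationAt (EuclideanSpace ℝ (Fin n)) (TangentSpace (𝓡 n)) (pr q₀))
          (F j q)).2) q₀ := h2
    have h4 : ContMDiffAt IN 𝓘(ℝ, Fin n → ℝ) (⊤ : ℕ∞) (fun q =>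
        (eqE n) ((trivializationAt (EuclideanSpace ℝ (Fin n)) (TangentSpace (𝓡 n)) (pr q₀))
          (F j q)).2) q₀ :=
      ((contMDiff_iff_contDiff.mpr ((eqE n) : EuclideanSpace ℝ (Fin n) →L[ℝ]
        (Fin n → ℝ)).contDiff) _).comp q₀ h3
    exact contMDiffAt_pi_space.mp h4 i
  have hB1 : B q₀ = 1 := by
    ext i j
    have e1 : F j q₀ = ⟨pr q₀, vj j⟩ := by
      show tangentMap IN (𝓡 n) pr (V j q₀) = _
      have e0 : V j q₀ = ⟨q₀, Wj j⟩ := congrArg (Bundle.TotalSpace.mk' EN q₀) (hVq0 j)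
      rw [e0]
      show (⟨pr q₀, mfderiv IN (𝓡 n) pr q₀ (Wj j)⟩ : TangentBundle (𝓡 n) M) = _
      rw [hWj j]
    show ((trivializationAt (EuclideanSpace ℝ (Fin n)) (TangentSpace (𝓡 n)) (pr q₀))
        (F j q₀)).2 i = _
    rw [e1]
    have e2 := (trivializationAt (EuclideanSpace ℝ (Fin n)) (TangentSpace (𝓡 n))
      (pr q₀)).apply_mk_symm hx0base (WithLp.toLp 2 (δ j))
    show ((trivializationAt (EuclideanSpace ℝ (Fin n)) (TangentSpace (𝓡 n)) (pr q₀))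
        ⟨pr q₀, (trivializationAt (EuclideanSpace ℝ (Fin n)) (TangentSpace (𝓡 n))
          (pr q₀)).symm (pr q₀) (WithLp.toLp 2 (δ j))⟩).2 i = (1 : Matrix (Fin n) (Fin n) ℝ) i j
    rw [e2]
    have e4 : (δ j) i = ite (i = j) (1:ℝ) 0 := Pi.single_apply j (1:ℝ) i
    show (δ j) i = (1 : Matrix (Fin n) (Fin n) ℝ) i j
    rw [e4, Matrix.one_apply]
  have hBunit : ∀ᶠ q in nhds q₀, IsUnit (B q) := by
    have hco : ContinuousAt B q₀ := hBsm.continuousAt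
    have h1 : {x : Matrix (Fin n) (Fin n) ℝ | IsUnit x} ∈ nhds (B q₀) := by
      rw [hB1]; exact Units.isOpen.mem_nhds isUnit_one
    exact hco h1
  -- the "abstract" matrix of φ in the two trivializations
  let Km : N → Matrix (Fin n) (Fin n) ℝ := fun q => LinearMap.toMatrix'
    ((φ q).toLinearMap ∘ₗ
      ((trivializationAt (EuclideanSpace ℝ (Fin n)) (TangentSpace (𝓡 n))
        (pr q₀)).symmL ℝ (pr q)).toLinearMap ∘ₗ (eqE n).symm.toLinearEquiv.toLinearMap)
  have hKmV : ∀ q, pr q ∈ (trivializationAt (EuclideanSpace ℝ (Fin n)) (TangentSpace (𝓡 n))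
      (pr q₀)).baseSet → ∀ (v : Fin n → ℝ), (Km q).mulVec v =
      φ q ((trivializationAt (EuclideanSpace ℝ (Fin n)) (TangentSpace (𝓡 n)) (pr q₀)).symm
        (pr q) (WithLp.toLp 2 v)) := by
    intro q hq v
    rw [mulVec_toMatrix']
    exact congrArg (φ q) ((trivializationAt (EuclideanSpace ℝ (Fin n)) (TangentSpace (𝓡 n))
      (pr q₀)).symmL_apply hq _)
  have hKmUnit : ∀ q, pr q ∈ (trivializationAt (EuclideanSpace ℝ (Fin n)) (TangentSpace (𝓡 n))
      (pr q₀)).baseSet → IsUnit (Km q) := by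
    intro q hq
    have e3 : Km q = LinearMap.toMatrix' (((eqE n).symm.toLinearEquiv.trans
        (((trivializationAt (EuclideanSpace ℝ (Fin n)) (TangentSpace (𝓡 n))
          (pr q₀)).continuousLinearEquivAt ℝ (pr q) hq).symm.toLinearEquiv.trans
            (φ q))).toLinearMap) :=
      congrArg LinearMap.toMatrix' (LinearMap.ext fun v => by
        exact congrArg (φ q) (congrFun (Trivialization.symm_continuousLinearEquivAt_eq _ hq) _).symm)
    rw [e3]
    exact isUnit_toMatrix' _
  have hAKB : ∀ᶠ q in nhds q₀, A q = Km q * B q := by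
    filter_upwards [((hpr q₀).continuousAt.preimage_mem_nhds
      ((trivializationAt (EuclideanSpace ℝ (Fin n)) (TangentSpace (𝓡 n))
        (pr q₀)).open_baseSet.mem_nhds hx0base))] with q hq
    ext i j
    have h0 : θ q ((trivializationAt EN (TangentSpace IN) q₀).symm q (cc j))
        = φ q (mfderiv IN (𝓡 n) pr q
          ((trivializationAt EN (TangentSpace IN) q₀).symm q (cc j))) := (hφθ q _).symm
    have hsym : (trivializationAt (EuclideanSpace ℝ (Fin n)) (TangentSpace (𝓡 n))
        (pr q₀)).symm (pr q) (((trivializationAt (EuclideanSpace ℝ (Fin n))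
          (TangentSpace (𝓡 n)) (pr q₀)) (F j q)).2)
        = mfderiv IN (𝓡 n) pr q ((trivializationAt EN (TangentSpace IN) q₀).symm q (cc j)) :=
      (trivializationAt (EuclideanSpace ℝ (Fin n)) (TangentSpace (𝓡 n))
        (pr q₀)).symm_apply_apply_mk hq _
    have h5 : A q i j = φ q (mfderiv IN (𝓡 n) pr q
        ((trivializationAt EN (TangentSpace IN) q₀).symm q (cc j))) i :=
      congrFun h0 i
    have h6 : (Km q).mulVec (fun l => B q l j) i = (Km q * B q) i j := by
      rw [Matrix.mul_apply]
      rfl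
    have h7 := hKmV q hq (((trivializationAt (EuclideanSpace ℝ (Fin n)) (TangentSpace (𝓡 n))
      (pr q₀)) (F j q)).2)
    rw [h5, ← hsym, ← h7]
    exact h6
  refine ⟨fun q => A q * Ring.inverse (B q), ?_, ?_, ?_⟩
  · exact matrix_mul_contMDiffAt IN hAsm
      (matrix_inv_contMDiffAt IN hBsm (by rw [hB1]; exact isUnit_one))
  · filter_upwards [hAKB, hBunit, ((hpr q₀).continuousAt.preimage_mem_nhds
      ((trivializationAt (EuclideanSpace ℝ (Fin n)) (TangentSpace (𝓡 n))
        (pr q₀)).open_baseSet.mem_nhds hx0base))] with q h1 h2 h3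
    rw [h1, mul_assoc, Ring.mul_inverse_cancel _ h2, mul_one]
    exact hKmUnit q h3
  · filter_upwards [hAKB, hBunit, ((hpr q₀).continuousAt.preimage_mem_nhds
      ((trivializationAt (EuclideanSpace ℝ (Fin n)) (TangentSpace (𝓡 n))
        (pr q₀)).open_baseSet.mem_nhds hx0base))] with q h1 h2 h3
    intro v
    rw [h1, mul_assoc, Ring.mul_inverse_cancel _ h2, mul_one]
    exact hKmV q h3 v

end Core

end Stmt17Aux

open Bundle Filter Function Topology

set_option maxHeartbeats 4000000 in
/-- a smooth principal `GL(n,ℝ)`-bundle `prj : P → M` (with smooth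
free fiberwise-transitive right action `act` and smooth local sections) is
isomorphic to the frame bundle `FM` — a principal `GL(n,ℝ)`-bundle whose points
are frames, whose action is composition of frames with matrices, and whose
canonical (solder) form `u ↦ u⁻¹ ∘ prj̃_*` is smooth — if and only if there exists
a smooth `ℝⁿ`-valued 1-form `θ` on `P` which is `id`-equivariant
(`θ(R_g* X) = g⁻¹ θ(X)`) and satisfies `Ker θ_p = Ker (prj_*)_p` at every `p`. -/
theorem stmt17 (n : ℕ)
    {M : Type*} [TopologicalSpace M] [ChartedSpace (EuclideanSpace ℝ (Fin n)) M]
    [IsManifold (𝓡 n) (⊤ : ℕ∞) M]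
    {EP HP : Type*} [NormedAddCommGroup EP] [NormedSpace ℝ EP] [TopologicalSpace HP]
    (IP : ModelWithCorners ℝ EP HP)
    {P : Type*} [TopologicalSpace P] [ChartedSpace HP P] [IsManifold IP (⊤ : ℕ∞) P]
    -- the principal bundle structure on P
    (prj : P → M) (hprj : ContMDiff IP (𝓡 n) (⊤ : ℕ∞) prj)
    (act : P → GLn n → P)
    (hact_smooth : ContMDiff (IP.prod (glModel n)) IP (⊤ : ℕ∞)
      (fun q : P × GLn n => act q.1 q.2))
    (hact_one : ∀ p, act p 1 = p)
    (hact_mul : ∀ p g g', act (act p g) g' = act p (g * g'))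
    (hact_pi : ∀ p g, prj (act p g) = prj p)
    (hact_free_trans : ∀ p q : P, prj p = prj q → ∃! g : GLn n, act p g = q)
    (hsections : ∀ x : M, ∃ U : Set M, IsOpen U ∧ x ∈ U ∧ ∃ σ : M → P,
      ContMDiffOn (𝓡 n) IP (⊤ : ℕ∞) σ U ∧ ∀ y ∈ U, prj (σ y) = y)
    -- the frame bundle FM, as a smooth principal GL(n,ℝ)-bundle of frames
    {EF HF : Type*} [NormedAddCommGroup EF] [NormedSpace ℝ EF] [TopologicalSpace HF]
    (IF : ModelWithCorners ℝ EF HF)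
    [TopologicalSpace (FrameBundle n M)] [ChartedSpace HF (FrameBundle n M)]
    [IsManifold IF (⊤ : ℕ∞) (FrameBundle n M)]
    (hprojF : ContMDiff IF (𝓡 n) (⊤ : ℕ∞) (Sigma.fst : FrameBundle n M → M))
    (actF : FrameBundle n M → GLn n → FrameBundle n M)
    (hactF_smooth : ContMDiff (IF.prod (glModel n)) IF (⊤ : ℕ∞)
      (fun q : FrameBundle n M × GLn n => actF q.1 q.2))
    (hactF_fst : ∀ u g, (actF u g).1 = u.1)
    (hactF_snd : ∀ (u : FrameBundle n M) (g : GLn n) (v : Fin n → ℝ),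
      ((actF u g).2 v : EuclideanSpace ℝ (Fin n)) =
        u.2 ((g : Matrix (Fin n) (Fin n) ℝ).mulVec v))
    (hactF_one : ∀ u, actF u 1 = u)
    (hactF_mul : ∀ u g g', actF (actF u g) g' = actF u (g * g'))
    (hactF_free_trans : ∀ u w : FrameBundle n M, u.1 = w.1 →
      ∃! g : GLn n, actF u g = w)
    (hsectionsF : ∀ x : M, ∃ U : Set M, IsOpen U ∧ x ∈ U ∧ ∃ σ : M → FrameBundle n M,
      ContMDiffOn (𝓡 n) IF (⊤ : ℕ∞) σ U ∧ ∀ y ∈ U, (σ y).1 = y)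
    -- the canonical (solder) form of FM is smooth
    (hcanonical : ContMDiff IF.tangent 𝓘(ℝ, Fin n → ℝ) (⊤ : ℕ∞)
      (fun X : TangentBundle IF (FrameBundle n M) =>
        (X.proj.2.symm (mfderiv IF (𝓡 n) (Sigma.fst : FrameBundle n M → M)
          X.proj X.snd) : Fin n → ℝ))) :
    -- P ≅ FM, as principal bundles over M
    (∃ (J : P → FrameBundle n M) (Jinv : FrameBundle n M → P),
        (∀ p, Jinv (J p) = p) ∧ (∀ u, J (Jinv u) = u) ∧
        ContMDiff IP IF (⊤ : ℕ∞) J ∧ ContMDiff IF IP (⊤ : ℕ∞) Jinv ∧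
        (∀ p, (J p).1 = prj p) ∧ (∀ p g, J (act p g) = actF (J p) g)) ↔
    -- ∃ a smooth id-equivariant ℝⁿ-valued 1-form θ with Ker θ = Ker prj_*
    (∃ θ : (p : P) → (TangentSpace IP p →ₗ[ℝ] (Fin n → ℝ)),
        ContMDiff IP.tangent 𝓘(ℝ, Fin n → ℝ) (⊤ : ℕ∞)
          (fun X : TangentBundle IP P => θ X.proj X.snd) ∧
        (∀ (p : P) (g : GLn n) (X : TangentSpace IP p),
          θ (act p g) (mfderiv IP IP (fun q => act q g) p X) =
            ((g⁻¹ : GLn n) : Matrix (Fin n) (Fin n) ℝ).mulVec (θ p X)) ∧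
        (∀ (p : P) (X : TangentSpace IP p),
          θ p X = 0 ↔ mfderiv IP (𝓡 n) prj p X = 0)) := by
  classical
  constructor
  · rintro ⟨J, Jinv, hJi, hJi', hJsm, hJism, hJfst, hJact⟩
    have hJd : ∀ p, MDifferentiableAt IP IF J p := fun p => (hJsm p).mdifferentiableAt (by simp)
    have hFd : ∀ u, MDifferentiableAt IF (𝓡 n) (Sigma.fst : FrameBundle n M → M) u :=
      fun u => (hprojF u).mdifferentiableAt (by simp)
    -- the aux lemma about frames of actF
    have auxF : ∀ (u : FrameBundle n M) (g : GLn n) (Z : TangentSpace (𝓡 n) (actF u g).1),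
        (actF u g).2.symm Z
          = ((g⁻¹ : GLn n) : Matrix (Fin n) (Fin n) ℝ).mulVec (u.2.symm Z) := by
      intro u g Z
      have h1 : ((actF u g).2 (((g⁻¹ : GLn n) : Matrix (Fin n) (Fin n) ℝ).mulVec (u.2.symm Z))
          : EuclideanSpace ℝ (Fin n)) = Z := by
        rw [hactF_snd, Matrix.mulVec_mulVec, Units.mul_inv, Matrix.one_mulVec]
        exact u.2.apply_symm_apply Z
      exact (actF u g).2.symm_apply_eq.mpr h1.symm
    refine ⟨fun p => (J p).2.symm.toLinearMap ∘ₗ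
        ((mfderiv IF (𝓡 n) (Sigma.fst : FrameBundle n M → M) (J p)).toLinearMap ∘ₗ
          (mfderiv IP IF J p).toLinearMap), ?_, ?_, ?_⟩
    · exact hcanonical.comp (hJsm.contMDiff_tangentMap (by simp))
    · intro p g X
      have hRd : MDifferentiableAt IP IP (fun q => act q g) p :=
        ((hact_smooth.comp (contMDiff_id.prodMk contMDiff_const)) p).mdifferentiableAt (by simp)
      have hRFd : MDifferentiableAt IF IF (fun u => actF u g) (J p) :=
        ((hactF_smooth.comp (contMDiff_id.prodMk contMDiff_const)) (J p)).mdifferentiableAt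
          (by simp)
      have key : mfderiv IP IF J (act p g) (mfderiv IP IP (fun q => act q g) p X)
          = mfderiv IF IF (fun u => actF u g) (J p) (mfderiv IP IF J p X) := by
        have e1 : mfderiv IP IF (J ∘ fun q => act q g) p
            = (mfderiv IP IF J (act p g)).comp (mfderiv IP IP (fun q => act q g) p) :=
          mfderiv_comp p (hJd _) hRd
        have e2 : mfderiv IP IF ((fun u => actF u g) ∘ J) p
            = (mfderiv IF IF (fun u => actF u g) (J p)).comp (mfderiv IP IF J p) :=
          mfderiv_comp p hRFd (hJd p)
        have e0 : (J ∘ fun q => act q g) = ((fun u => actF u g) ∘ J) :=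
          funext fun q => hJact q g
        rw [e0] at e1
        have := e1.symm.trans e2
        exact DFunLike.congr_fun this X
      show (J (act p g)).2.symm
          (mfderiv IF (𝓡 n) (Sigma.fst : FrameBundle n M → M) (J (act p g))
            (mfderiv IP IF J (act p g) (mfderiv IP IP (fun q => act q g) p X))) = _
      rw [key]
      have e3 : mfderiv IF (𝓡 n) (Sigma.fst : FrameBundle n M → M) (J (act p g))
            (mfderiv IF IF (fun u => actF u g) (J p) (mfderiv IP IF J p X))
          = mfderiv IF (𝓡 n) (Sigma.fst : FrameBundle n M → M) (J p)
            (mfderiv IP IF J p X) := by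
        have e4 : mfderiv IF (𝓡 n) ((Sigma.fst : FrameBundle n M → M) ∘ fun u => actF u g)
              (J p)
            = (mfderiv IF (𝓡 n) (Sigma.fst : FrameBundle n M → M) (actF (J p) g)).comp
              (mfderiv IF IF (fun u => actF u g) (J p)) :=
          mfderiv_comp (J p) (hFd _) hRFd
        have e5 : ((Sigma.fst : FrameBundle n M → M) ∘ fun u => actF u g)
            = (Sigma.fst : FrameBundle n M → M) := funext fun u => hactF_fst u g
        rw [e5] at e4
        rw [hJact p g]
        exact (DFunLike.congr_fun e4 (mfderiv IP IF J p X)).symm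
      -- conclude with auxF
      have hJg : J (act p g) = actF (J p) g := hJact p g
      revert e3
      rw [hJg]
      intro e3
      show (actF (J p) g).2.symm _ = _
      rw [e3]
      exact auxF (J p) g _
    · intro p X
      have hcomp : mfderiv IP (𝓡 n) prj p
          = (mfderiv IF (𝓡 n) (Sigma.fst : FrameBundle n M → M) (J p)).comp
            (mfderiv IP IF J p) := by
        have e0 : prj = ((Sigma.fst : FrameBundle n M → M) ∘ J) :=
          funext fun q => (hJfst q).symm
        rw [e0]
        exact mfderiv_comp p (hFd (J p)) (hJd p)
      constructor
      · intro h
        have h' : mfderiv IF (𝓡 n) (Sigma.fst : FrameBundle n M → M) (J p)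
            (mfderiv IP IF J p X) = 0 := by
          have := (J p).2.symm.map_eq_zero_iff.mp h
          exact this
        rw [hcomp]
        exact h'
      · intro h
        rw [hcomp] at h
        have h2 : (mfderiv IF (𝓡 n) (Sigma.fst : FrameBundle n M → M) (J p))
            ((mfderiv IP IF J p) X) = 0 := h
        show (J p).2.symm ((mfderiv IF (𝓡 n) (Sigma.fst : FrameBundle n M → M) (J p))
            ((mfderiv IP IF J p) X)) = 0
        rw [h2]
        exact map_zero _
  · rintro ⟨θ, hθsm, hθequiv, hθker⟩
    classical
    have hprd : ∀ p, MDifferentiableAt IP (𝓡 n) prj p :=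
      fun p => (hprj p).mdifferentiableAt (by simp)
    have hfstd : ∀ u, MDifferentiableAt IF (𝓡 n) (Sigma.fst : FrameBundle n M → M) u :=
      fun u => (hprojF u).mdifferentiableAt (by simp)
    have hactsm : ∀ g : GLn n, ContMDiff IP IP (⊤ : ℕ∞) (fun q => act q g) :=
      fun g => hact_smooth.comp (contMDiff_id.prodMk contMDiff_const)
    have hactFsm : ∀ g : GLn n, ContMDiff IF IF (⊤ : ℕ∞) (fun u => actF u g) :=
      fun g => hactF_smooth.comp (contMDiff_id.prodMk contMDiff_const)
    -- local "sections through a point" on P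
    have hTAU : ∀ p : P, ∃ τ : M → P, ContMDiffAt (𝓡 n) IP (⊤ : ℕ∞) τ (prj p) ∧ τ (prj p) = p ∧
        (∀ᶠ y in nhds (prj p), prj (τ y) = y) := by
      intro p
      obtain ⟨U, hUo, hxU, σ, hσ, hσs⟩ := hsections (prj p)
      obtain ⟨g0, hg0, -⟩ := hact_free_trans (σ (prj p)) p (hσs _ hxU)
      refine ⟨fun y => act (σ y) g0, ?_, hg0, ?_⟩
      · exact (((hactsm g0).comp_contMDiffOn hσ).contMDiffAt (hUo.mem_nhds hxU))
      · filter_upwards [hUo.mem_nhds hxU] with y hy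
        show prj (act (σ y) g0) = y
        rw [hact_pi, hσs y hy]
    -- local "sections through a point" on FM
    have hTAUF : ∀ u : FrameBundle n M, ∃ τ : M → FrameBundle n M,
        ContMDiffAt (𝓡 n) IF (⊤ : ℕ∞) τ u.1 ∧ τ u.1 = u ∧
        (∀ᶠ y in nhds u.1, (τ y).1 = y) := by
      intro u
      obtain ⟨U, hUo, hxU, σ, hσ, hσs⟩ := hsectionsF u.1
      obtain ⟨g0, hg0, -⟩ := hactF_free_trans (σ u.1) u (hσs _ hxU)
      refine ⟨fun y => actF (σ y) g0, ?_, hg0, ?_⟩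
      · exact (((hactFsm g0).comp_contMDiffOn hσ).contMDiffAt (hUo.mem_nhds hxU))
      · filter_upwards [hUo.mem_nhds hxU] with y hy
        show (actF (σ y) g0).1 = y
        rw [hactF_fst, hσs y hy]
    -- right inverses of the differential of prj
    have hSur : ∀ p : P, ∃ s : TangentSpace (𝓡 n) (prj p) →L[ℝ] TangentSpace IP p,
        ∀ v, mfderiv IP (𝓡 n) prj p (s v) = v := by
      intro p
      obtain ⟨τ, hτ, hτp, hτs⟩ := hTAU p
      refine ⟨mfderiv (𝓡 n) IP τ (prj p), ?_⟩
      intro v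
      have hch : mfderiv (𝓡 n) (𝓡 n) (prj ∘ τ) (prj p)
          = (mfderiv IP (𝓡 n) prj (τ (prj p))).comp (mfderiv (𝓡 n) IP τ (prj p)) :=
        mfderiv_comp _ (hprd _) (hτ.mdifferentiableAt (by simp))
      have hid : mfderiv (𝓡 n) (𝓡 n) (prj ∘ τ) (prj p)
          = ContinuousLinearMap.id ℝ (TangentSpace (𝓡 n) (prj p)) := by
        have h1 : (prj ∘ τ) =ᶠ[nhds (prj p)] id := hτs.mono fun y hy => hy
        rw [h1.mfderiv_eq, mfderiv_id]
      have h2 := DFunLike.congr_fun (hch.symm.trans hid) v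
      have hpt : mfderiv IP (𝓡 n) prj (τ (prj p)) = mfderiv IP (𝓡 n) prj p := by rw [hτp]
      rw [hpt] at h2
      exact h2
    -- the family of frames induced by θ
    let s0 : (p : P) → (TangentSpace (𝓡 n) (prj p) →L[ℝ] TangentSpace IP p) :=
      fun p => (hSur p).choose
    have hs0 : ∀ p v, mfderiv IP (𝓡 n) prj p (s0 p v) = v := fun p => (hSur p).choose_spec
    let φL : (p : P) → (TangentSpace (𝓡 n) (prj p) →ₗ[ℝ] (Fin n → ℝ)) :=
      fun p => θ p ∘ₗ (s0 p).toLinearMap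
    have hφθL : ∀ p (X : TangentSpace IP p), φL p (mfderiv IP (𝓡 n) prj p X) = θ p X := by
      intro p X
      have h1 : mfderiv IP (𝓡 n) prj p (s0 p (mfderiv IP (𝓡 n) prj p X) - X) = 0 := by
        rw [map_sub, hs0, sub_self]
      have h2 : θ p (s0 p (mfderiv IP (𝓡 n) prj p X) - X) = 0 := (hθker p _).mpr h1
      rw [map_sub, sub_eq_zero] at h2
      exact h2
    have hφLinj : ∀ p, Function.Injective (φL p) := by
      intro p Z1 Z2 h12
      have h1 : φL p (Z1 - Z2) = 0 := by rw [map_sub, h12, sub_self]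
      have h2 : θ p (s0 p (Z1 - Z2)) = 0 := h1
      have h3 := (hθker p _).mp h2
      rw [hs0] at h3
      exact sub_eq_zero.mp h3
    have hrank : ∀ x : M, Module.finrank ℝ (TangentSpace (𝓡 n) x)
        = Module.finrank ℝ (Fin n → ℝ) := fun x => by
      show Module.finrank ℝ (EuclideanSpace ℝ (Fin n)) = _
      rw [finrank_euclideanSpace_fin, Module.finrank_fin_fun]
    let φ : (p : P) → (TangentSpace (𝓡 n) (prj p) ≃ₗ[ℝ] (Fin n → ℝ)) := fun p =>
      letI : FiniteDimensional ℝ (TangentSpace (𝓡 n) (prj p)) :=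
        (inferInstance : FiniteDimensional ℝ (EuclideanSpace ℝ (Fin n)))
      LinearMap.linearEquivOfInjective (φL p) (hφLinj p) (hrank (prj p))
    have hφ : ∀ p (X : TangentSpace IP p), φ p (mfderiv IP (𝓡 n) prj p X) = θ p X := by
      intro p X
      show φL p (mfderiv IP (𝓡 n) prj p X) = θ p X
      exact hφθL p X
    -- equivariance of φ
    have hφequiv : ∀ p (g : GLn n) (Z : TangentSpace (𝓡 n) (prj (act p g))),
        φ (act p g) Z = ((g⁻¹ : GLn n) : Matrix (Fin n) (Fin n) ℝ).mulVec (φ p Z) := by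
      intro p g Z
      have hRd : MDifferentiableAt IP IP (fun q => act q g) p :=
        ((hactsm g) p).mdifferentiableAt (by simp)
      have hc1 : mfderiv IP (𝓡 n) (prj ∘ fun q => act q g) p
          = (mfderiv IP (𝓡 n) prj (act p g)).comp (mfderiv IP IP (fun q => act q g) p) :=
        mfderiv_comp p (hprd _) hRd
      have hpr_eq : (prj ∘ fun q => act q g) = prj := funext fun q => hact_pi q g
      rw [hpr_eq] at hc1
      have hZ : mfderiv IP (𝓡 n) prj p (s0 p Z) = Z := hs0 p Z
      have h4 : mfderiv IP (𝓡 n) prj (act p g)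
          (mfderiv IP IP (fun q => act q g) p (s0 p Z)) = Z :=
        (DFunLike.congr_fun hc1 (s0 p Z)).symm.trans hZ
      calc φ (act p g) Z
          = φ (act p g) (mfderiv IP (𝓡 n) prj (act p g)
              (mfderiv IP IP (fun q => act q g) p (s0 p Z))) := by rw [h4]
        _ = θ (act p g) (mfderiv IP IP (fun q => act q g) p (s0 p Z)) := hφ _ _
        _ = ((g⁻¹ : GLn n) : Matrix (Fin n) (Fin n) ℝ).mulVec (θ p (s0 p Z)) := hθequiv p g _
        _ = ((g⁻¹ : GLn n) : Matrix (Fin n) (Fin n) ℝ).mulVec (φ p Z) := by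
            rw [← hφ p (s0 p Z), hZ]
    -- sigma extensionality for frames
    have sigma_eq : ∀ (u w : FrameBundle n M), u.1 = w.1 →
        (∀ v : Fin n → ℝ, (u.2 v : EuclideanSpace ℝ (Fin n)) = w.2 v) → u = w := by
      rintro ⟨x, e⟩ ⟨y, f⟩ h1 h2
      dsimp only at h1
      subst h1
      have he : e = f := LinearEquiv.ext fun v => h2 v
      rw [he]
    -- the bundle map J
    let J : P → FrameBundle n M := fun p => ⟨prj p, (φ p).symm⟩
    have hJact : ∀ p (g : GLn n), J (act p g) = actF (J p) g := by
      intro p g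
      refine (sigma_eq (actF (J p) g) (J (act p g)) ?_ ?_).symm
      · rw [hactF_fst]
        exact (hact_pi p g).symm
      · intro v
        rw [hactF_snd]
        show ((φ p).symm ((g : Matrix (Fin n) (Fin n) ℝ).mulVec v) : EuclideanSpace ℝ (Fin n))
          = (φ (act p g)).symm v
        refine (((φ (act p g)).symm_apply_eq).mpr ?_).symm
        refine Eq.trans ?_ (hφequiv _ _ _).symm
        rw [LinearEquiv.apply_symm_apply, Matrix.mulVec_mulVec, Units.inv_mul,
          Matrix.one_mulVec]
    have hJinj : Function.Injective J := by
      intro p q hpq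
      have h1 : prj p = prj q := congrArg Sigma.fst hpq
      obtain ⟨g, hg, -⟩ := hact_free_trans p q h1
      obtain ⟨g', hg', huni⟩ := hactF_free_trans (J p) (J p) rfl
      have h2 : actF (J p) g = J p := by rw [← hJact, hg, hpq]
      have h3 : actF (J p) 1 = J p := hactF_one _
      have h5 : g = (1 : GLn n) := (huni g h2).trans (huni 1 h3).symm
      rw [← hg, h5, hact_one]
    have hJsurj : Function.Surjective J := by
      intro u
      obtain ⟨U, hUo, hxU, σ, hσ, hσs⟩ := hsections u.1
      have hps : prj (σ u.1) = u.1 := hσs _ hxU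
      have hcu := Stmt17Aux.isUnit_toMatrix' (u.2.trans (φ (σ u.1)))
      refine ⟨act (σ u.1) hcu.unit, ?_⟩
      apply sigma_eq
      · show prj (act (σ u.1) hcu.unit) = u.1
        rw [hact_pi, hps]
      · intro v
        show ((φ (act (σ u.1) hcu.unit)).symm v : EuclideanSpace ℝ (Fin n)) = u.2 v
        refine ((φ _).symm_apply_eq).mpr ?_
        refine Eq.trans ?_ (hφequiv _ _ _).symm
        have h1 : φ (σ u.1) (u.2 v)
            = ((hcu.unit : GLn n) : Matrix (Fin n) (Fin n) ℝ).mulVec v := by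
          rw [IsUnit.unit_spec, Stmt17Aux.mulVec_toMatrix']
          rfl
        rw [h1, Matrix.mulVec_mulVec, Units.inv_mul, Matrix.one_mulVec]
    let Jinv : FrameBundle n M → P := fun u => (hJsurj u).choose
    have hJi' : ∀ u, J (Jinv u) = u := fun u => (hJsurj u).choose_spec
    have hJi : ∀ p, Jinv (J p) = p := fun p => hJinj (hJi' (J p))
    -- smoothness of J
    have hJsm : ContMDiff IP IF (⊤ : ℕ∞) J := by
      intro p0
      obtain ⟨τ, hτ, hτp, hτs⟩ := hTAU p0
      obtain ⟨UF, hUFo, hxUF, σF, hσF, hσFs⟩ := hsectionsF (prj p0)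
      obtain ⟨KK, hKKsm, hKKunit, hKKv⟩ := Stmt17Aux.core IP prj hprj θ φ hφ p0
        (fun W => hθsm _) τ hτ hτp hτs
      -- the solder form associated with the frames given by σF is smooth near prj p0
      have hθMsm : ∀ W : TangentSpace (𝓡 n) (prj p0),
          ContMDiffAt (𝓡 n).tangent 𝓘(ℝ, Fin n → ℝ) (⊤ : ℕ∞)
          (fun X : TangentBundle (𝓡 n) M =>
            ((σF X.proj).2.symm.toLinearMap ∘ₗ
              (mfderiv (𝓡 n) (𝓡 n) id X.proj).toLinearMap) X.snd)
          (Bundle.TotalSpace.mk' (EuclideanSpace ℝ (Fin n)) (prj p0) W) := by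
        intro W
        have htmw := hσF.contMDiffOn_tangentMapWithin (m := (⊤ : ℕ∞)) (by simp) hUFo.uniqueMDiffOn
        have hopen : IsOpen (Bundle.TotalSpace.proj ⁻¹' UF :
            Set (TangentBundle (𝓡 n) M)) :=
          hUFo.preimage (FiberBundle.continuous_proj (EuclideanSpace ℝ (Fin n))
            (TangentSpace (𝓡 n)))
        have h1 : ContMDiffAt (𝓡 n).tangent IF.tangent (⊤ : ℕ∞)
            (tangentMapWithin (𝓡 n) IF σF UF)
            (Bundle.TotalSpace.mk' (EuclideanSpace ℝ (Fin n)) (prj p0) W) :=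
          htmw.contMDiffAt (hopen.mem_nhds hxUF)
        have h2 := (hcanonical _).comp _ h1
        refine h2.congr_of_eventuallyEq ?_
        filter_upwards [hopen.mem_nhds hxUF] with X hXUF
        have hσd : MDifferentiableAt (𝓡 n) IF σF X.proj :=
          (hσF.contMDiffAt (hUFo.mem_nhds hXUF)).mdifferentiableAt (by simp)
        have hchain : mfderiv (𝓡 n) (𝓡 n)
            ((Sigma.fst : FrameBundle n M → M) ∘ σF) X.proj
            = (mfderiv IF (𝓡 n) (Sigma.fst : FrameBundle n M → M) (σF X.proj)).comp
              (mfderiv (𝓡 n) IF σF X.proj) := mfderiv_comp _ (hfstd _) hσd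
        have hev : ((Sigma.fst : FrameBundle n M → M) ∘ σF) =ᶠ[nhds X.proj] id := by
          filter_upwards [hUFo.mem_nhds hXUF] with y hy
          exact hσFs y hy
        have hid2 : mfderiv (𝓡 n) (𝓡 n) ((Sigma.fst : FrameBundle n M → M) ∘ σF) X.proj
            = mfderiv (𝓡 n) (𝓡 n) id X.proj := hev.mfderiv_eq
        have hmw : mfderivWithin (𝓡 n) IF σF UF X.proj = mfderiv (𝓡 n) IF σF X.proj :=
          mfderivWithin_of_isOpen hUFo hXUF
        show (σF X.proj).2.symm (mfderiv (𝓡 n) (𝓡 n) id X.proj X.snd)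
            = (σF X.proj).2.symm (mfderiv IF (𝓡 n) (Sigma.fst : FrameBundle n M → M)
                (σF X.proj) (mfderivWithin (𝓡 n) IF σF UF X.proj X.snd))
        rw [hmw, ← hid2, hchain]
        rfl
      obtain ⟨CC, hCCsm, hCCunit, hCCv⟩ := Stmt17Aux.core (𝓡 n) (id : M → M) contMDiff_id
        (fun x => ((σF x).2.symm.toLinearMap ∘ₗ (mfderiv (𝓡 n) (𝓡 n) id x).toLinearMap))
        (fun x => (σF x).2.symm) (fun x X => rfl) (prj p0) hθMsm id contMDiffAt_id rfl
        (Filter.Eventually.of_forall fun y => rfl)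
      have hKKu0 : IsUnit (KK p0) := hKKunit.self_of_nhds
      have hCCsm' : ContMDiffAt IP 𝓘(ℝ, Matrix (Fin n) (Fin n) ℝ) (⊤ : ℕ∞)
          (fun p => CC (prj p)) p0 := hCCsm.comp p0 (hprj p0)
      have hmKsm : ContMDiffAt IP 𝓘(ℝ, Matrix (Fin n) (Fin n) ℝ) (⊤ : ℕ∞)
          (fun p => CC (prj p) * Ring.inverse (KK p)) p0 :=
        Stmt17Aux.matrix_mul_contMDiffAt IP hCCsm'
          (Stmt17Aux.matrix_inv_contMDiffAt IP hKKsm hKKu0)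
      have hCCunit' : ∀ᶠ p in nhds p0, IsUnit (CC (prj p)) :=
        ((hprj p0).continuousAt).eventually hCCunit
      have hmKunit : ∀ᶠ p in nhds p0, IsUnit (CC (prj p) * Ring.inverse (KK p)) := by
        filter_upwards [hCCunit', hKKunit] with p h1 h2
        exact h1.mul (isUnit_ringInverse.mpr h2)
      let kgl : P → GLn n := fun p =>
        if h : IsUnit (CC (prj p) * Ring.inverse (KK p)) then h.unit else 1
      have hkval : ∀ᶠ p in nhds p0, ((kgl p : GLn n) : Matrix (Fin n) (Fin n) ℝ)
          = CC (prj p) * Ring.inverse (KK p) := by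
        filter_upwards [hmKunit] with p h
        show ((if h' : IsUnit (CC (prj p) * Ring.inverse (KK p)) then h'.unit else 1 :
          GLn n) : Matrix (Fin n) (Fin n) ℝ) = _
        rw [dif_pos h]
        exact h.unit_spec
      have hkglsm : ContMDiffAt IP (glModel n) (⊤ : ℕ∞) kgl p0 :=
        Stmt17Aux.units_contMDiffAt IP (hmKsm.congr_of_eventuallyEq hkval)
      have hσFsm' : ContMDiffAt IP IF (⊤ : ℕ∞) (fun p => σF (prj p)) p0 :=
        (hσF.contMDiffAt (hUFo.mem_nhds hxUF)).comp p0 (hprj p0)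
      have hRHS : ContMDiffAt IP IF (⊤ : ℕ∞) (fun p => actF (σF (prj p)) (kgl p)) p0 :=
        (hactF_smooth _).comp p0 (hσFsm'.prodMk hkglsm)
      refine hRHS.congr_of_eventuallyEq ?_
      have hUFev : ∀ᶠ p in nhds p0, prj p ∈ UF :=
        (hprj p0).continuousAt.preimage_mem_nhds (hUFo.mem_nhds hxUF)
      have hCCv' : ∀ᶠ p in nhds p0, ∀ w : Fin n → ℝ, (CC (prj p)).mulVec w
          = (σF (prj p)).2.symm ((trivializationAt (EuclideanSpace ℝ (Fin n))
              (TangentSpace (𝓡 n)) (prj p0)).symm (prj p) (WithLp.toLp 2 w)) :=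
        ((hprj p0).continuousAt).eventually hCCv
      filter_upwards [hkval, hKKv, hKKunit, hUFev, hCCv'] with p hk hKv hKu hUFp hCv
      apply sigma_eq
      · show prj p = (actF (σF (prj p)) (kgl p)).1
        rw [hactF_fst, hσFs _ hUFp]
      · intro v
        rw [hactF_snd]
        show ((φ p).symm v : EuclideanSpace ℝ (Fin n))
          = (σF (prj p)).2 (((kgl p : GLn n) : Matrix (Fin n) (Fin n) ℝ).mulVec v)
        rw [hk]
        have h1 : (CC (prj p) * Ring.inverse (KK p)).mulVec v
            = (CC (prj p)).mulVec ((Ring.inverse (KK p)).mulVec v) :=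
          (Matrix.mulVec_mulVec _ _ _).symm
        have h2 : (KK p).mulVec ((Ring.inverse (KK p)).mulVec v) = v := by
          rw [Matrix.mulVec_mulVec, Ring.mul_inverse_cancel _ hKu, Matrix.one_mulVec]
        have h3 : φ p ((trivializationAt (EuclideanSpace ℝ (Fin n)) (TangentSpace (𝓡 n))
            (prj p0)).symm (prj p) (WithLp.toLp 2 ((Ring.inverse (KK p)).mulVec v))) = v := by
          rw [← hKv ((Ring.inverse (KK p)).mulVec v)]
          exact h2
        have h4 : (trivializationAt (EuclideanSpace ℝ (Fin n)) (TangentSpace (𝓡 n))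
            (prj p0)).symm (prj p) (WithLp.toLp 2 ((Ring.inverse (KK p)).mulVec v)) = (φ p).symm v :=
          ((φ p).symm_apply_eq.mpr h3.symm).symm
        rw [h1, hCv ((Ring.inverse (KK p)).mulVec v), h4]
        exact ((σF (prj p)).2.apply_symm_apply _).symm
    -- smoothness of Jinv
    have hJinvsm : ContMDiff IF IP (⊤ : ℕ∞) Jinv := by
      intro u0
      obtain ⟨U2, hU2o, hxU2, σ2, hσ2, hσ2s⟩ := hsections u0.1
      have hp1 : prj (σ2 u0.1) = u0.1 := hσ2s _ hxU2
      obtain ⟨τ2, hτ2, hτ2p, hτ2s⟩ := hTAU (σ2 u0.1)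
      obtain ⟨KK2, hKK2sm, hKK2unit, hKK2v⟩ := Stmt17Aux.core IP prj hprj θ φ hφ (σ2 u0.1)
        (fun W => hθsm _) τ2 hτ2 hτ2p hτ2s
      obtain ⟨τF, hτF, hτFp, hτFs⟩ := hTAUF u0
      obtain ⟨DD, hDDsm, hDDunit, hDDv⟩ := Stmt17Aux.core IF
        (Sigma.fst : FrameBundle n M → M) hprojF
        (fun u => u.2.symm.toLinearMap ∘ₗ
          (mfderiv IF (𝓡 n) (Sigma.fst : FrameBundle n M → M) u).toLinearMap)
        (fun u => u.2.symm) (fun u X => rfl) u0 (fun W => hcanonical _) τF hτF hτFp hτFs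
      have htriv_eq : trivializationAt (EuclideanSpace ℝ (Fin n)) (TangentSpace (𝓡 n))
          (prj (σ2 u0.1)) = trivializationAt (EuclideanSpace ℝ (Fin n))
          (TangentSpace (𝓡 n)) u0.1 := by rw [hp1]
      have hσ2fst : ContMDiffAt IF IP (⊤ : ℕ∞) (fun u : FrameBundle n M => σ2 u.1) u0 :=
        (hσ2.contMDiffAt (hU2o.mem_nhds hxU2)).comp u0 (hprojF u0)
      have hKK2sm' : ContMDiffAt IF 𝓘(ℝ, Matrix (Fin n) (Fin n) ℝ) (⊤ : ℕ∞)
          (fun u : FrameBundle n M => KK2 (σ2 u.1)) u0 := hKK2sm.comp u0 hσ2fst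
      have hDD0unit : IsUnit (DD u0) := hDDunit.self_of_nhds
      have hgmatsm : ContMDiffAt IF 𝓘(ℝ, Matrix (Fin n) (Fin n) ℝ) (⊤ : ℕ∞)
          (fun u : FrameBundle n M => KK2 (σ2 u.1) * Ring.inverse (DD u)) u0 :=
        Stmt17Aux.matrix_mul_contMDiffAt IF hKK2sm'
          (Stmt17Aux.matrix_inv_contMDiffAt IF hDDsm hDD0unit)
      have hK2unit' : ∀ᶠ u : FrameBundle n M in nhds u0, IsUnit (KK2 (σ2 u.1)) :=
        hσ2fst.continuousAt.eventually hKK2unit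
      have hK2v' : ∀ᶠ u : FrameBundle n M in nhds u0, ∀ v : Fin n → ℝ,
          (KK2 (σ2 u.1)).mulVec v = φ (σ2 u.1)
            ((trivializationAt (EuclideanSpace ℝ (Fin n)) (TangentSpace (𝓡 n))
              (prj (σ2 u0.1))).symm (prj (σ2 u.1)) (WithLp.toLp 2 v)) :=
        hσ2fst.continuousAt.eventually hKK2v
      have hgunit : ∀ᶠ u : FrameBundle n M in nhds u0,
          IsUnit (KK2 (σ2 u.1) * Ring.inverse (DD u)) := by
        filter_upwards [hK2unit', hDDunit] with u h1 h2
        exact h1.mul (isUnit_ringInverse.mpr h2)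
      let ggl : FrameBundle n M → GLn n := fun u =>
        if h : IsUnit (KK2 (σ2 u.1) * Ring.inverse (DD u)) then h.unit else 1
      have hgval : ∀ᶠ u : FrameBundle n M in nhds u0,
          ((ggl u : GLn n) : Matrix (Fin n) (Fin n) ℝ)
            = KK2 (σ2 u.1) * Ring.inverse (DD u) := by
        filter_upwards [hgunit] with u h
        show ((if h' : IsUnit (KK2 (σ2 u.1) * Ring.inverse (DD u)) then h'.unit else 1 :
          GLn n) : Matrix (Fin n) (Fin n) ℝ) = _
        rw [dif_pos h]
        exact h.unit_spec
      have hgglsm : ContMDiffAt IF (glModel n) (⊤ : ℕ∞) ggl u0 :=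
        Stmt17Aux.units_contMDiffAt IF (hgmatsm.congr_of_eventuallyEq hgval)
      have hRHS : ContMDiffAt IF IP (⊤ : ℕ∞) (fun u : FrameBundle n M => act (σ2 u.1) (ggl u)) u0 :=
        (hact_smooth _).comp u0 (hσ2fst.prodMk hgglsm)
      refine hRHS.congr_of_eventuallyEq ?_
      have hU2ev : (Sigma.fst : FrameBundle n M → M) ⁻¹' U2 ∈ nhds u0 :=
        (hprojF u0).continuousAt.preimage_mem_nhds (hU2o.mem_nhds hxU2)
      filter_upwards [hgval, hK2v', hDDv, hDDunit, hU2ev] with u hg hK2v hDv hDu hU2m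
      -- pointwise : Jinv u = act (σ2 u.1) (ggl u)
      have hsec : prj (σ2 u.1) = u.1 := hσ2s _ hU2m
      have hkey : ∀ v : Fin n → ℝ, φ (σ2 u.1) (u.2 v)
          = ((ggl u : GLn n) : Matrix (Fin n) (Fin n) ℝ).mulVec v := by
        intro v
        have hw1 : (DD u).mulVec ((Ring.inverse (DD u)).mulVec v) = v := by
          rw [Matrix.mulVec_mulVec, Ring.mul_inverse_cancel _ hDu, Matrix.one_mulVec]
        have hw2 : u.2.symm ((trivializationAt (EuclideanSpace ℝ (Fin n)) (TangentSpace (𝓡 n))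
            u0.1).symm u.1 (WithLp.toLp 2 ((Ring.inverse (DD u)).mulVec v))) = v := by
          rw [← hDv ((Ring.inverse (DD u)).mulVec v)]
          exact hw1
        have hw3 : (trivializationAt (EuclideanSpace ℝ (Fin n)) (TangentSpace (𝓡 n))
            u0.1).symm u.1 (WithLp.toLp 2 ((Ring.inverse (DD u)).mulVec v)) = u.2 v := by
          have h5 := congrArg u.2 hw2
          rw [LinearEquiv.apply_symm_apply] at h5
          exact h5
        have harg : (trivializationAt (EuclideanSpace ℝ (Fin n)) (TangentSpace (𝓡 n))
            (prj (σ2 u0.1))).symm (prj (σ2 u.1)) (WithLp.toLp 2 ((Ring.inverse (DD u)).mulVec v))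
            = u.2 v := by
          rw [hsec, htriv_eq]
          exact hw3
        rw [hg, ← Matrix.mulVec_mulVec, hK2v ((Ring.inverse (DD u)).mulVec v), harg]
      apply hJinj
      rw [hJi' u]
      refine (sigma_eq (J (act (σ2 u.1) (ggl u))) u ?_ ?_).symm
      · show prj (act (σ2 u.1) (ggl u)) = u.1
        rw [hact_pi, hsec]
      · intro v
        show ((φ (act (σ2 u.1) (ggl u))).symm v : EuclideanSpace ℝ (Fin n)) = u.2 v
        refine ((φ _).symm_apply_eq).mpr ?_
        refine Eq.trans ?_ (hφequiv _ _ _).symm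
        rw [hkey v, Matrix.mulVec_mulVec, Units.inv_mul, Matrix.one_mulVec]
    exact ⟨J, Jinv, hJi, hJi', hJsm, hJinvsm, fun p => rfl, hJact⟩
end
end
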